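/- Let A be a square matrix over a commutative ring such that -A is similar to A (i.e., -A = PAP⁻¹ for some invertible P). Then A is nil-clean (a sum of a nilpotent and an idempotent matrix) if and only if A is weakly nil-clean (a sum or a difference of a nilpotent and an idempotent matrix). -/

import Mathlib

/-! A weakly nil-clean `a` is nil-clean or has `-a` nil-clean, since `a = n - e` means
`-a = -n + e`. Nil-cleanness is transported by ring automorphisms, in particular by
conjugation, so when `-a` is conjugate to `a` the two notions coincide. -/

section

variable {R : Type*} [Ring R]

def IsNilClean (a : R) : Prop :=
  ∃ n e : R, IsNilpotent n ∧ IsIdempotentElem e ∧ a = n + e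

def IsWeaklyNilClean (a : R) : Prop :=
  ∃ n e : R, IsNilpotent n ∧ IsIdempotentElem e ∧ (a = n + e ∨ a = n - e)

theorem isNilClean_neg_iff {a : R} :
    IsNilClean (-a) ↔ ∃ n e : R, IsNilpotent n ∧ IsIdempotentElem e ∧ a = n - e := by
  constructor
  · rintro ⟨n, e, hn, he, h⟩
    exact ⟨-n, e, hn.neg, he, by rw [← neg_neg a, h]; abel⟩
  · rintro ⟨n, e, hn, he, h⟩
    exact ⟨-n, e, hn.neg, he, by rw [h]; abel⟩

theorem isWeaklyNilClean_iff_or {a : R} :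
    IsWeaklyNilClean a ↔ IsNilClean a ∨ IsNilClean (-a) := by
  rw [isNilClean_neg_iff]
  constructor
  · rintro ⟨n, e, hn, he, h | h⟩
    exacts [Or.inl ⟨n, e, hn, he, h⟩, Or.inr ⟨n, e, hn, he, h⟩]
  · rintro (⟨n, e, hn, he, h⟩ | ⟨n, e, hn, he, h⟩)
    exacts [⟨n, e, hn, he, Or.inl h⟩, ⟨n, e, hn, he, Or.inr h⟩]

theorem IsNilClean.map {S F : Type*} [Ring S] [FunLike F R S] [RingHomClass F R S] (f : F)
    {a : R} (h : IsNilClean a) : IsNilClean (f a) := by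
  obtain ⟨n, e, hn, he, rfl⟩ := h
  exact ⟨f n, f e, hn.map f, he.map f, map_add f n e⟩

theorem IsNilClean.units_conj (u : Rˣ) {a : R} (h : IsNilClean a) :
    IsNilClean ((u : R) * a * ↑u⁻¹) := by
  simpa only [MulSemiringAction.toRingEquiv_apply_apply, ConjAct.units_smul_def,
    ConjAct.ofConjAct_toConjAct]
    using h.map (MulSemiringAction.toRingEquiv _ R (ConjAct.toConjAct u))

theorem isNilClean_iff_isWeaklyNilClean_of_neg_eq_conj {a : R} (u : Rˣ)
    (hu : -a = (u : R) * a * ↑u⁻¹) : IsNilClean a ↔ IsWeaklyNilClean a := by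
  have ha : a = (↑u⁻¹ : R) * -a * ↑u⁻¹⁻¹ := by
    rw [hu, inv_inv, mul_assoc, Units.inv_mul_cancel_right, Units.inv_mul_cancel_left]
  rw [isWeaklyNilClean_iff_or]
  refine ⟨Or.inl, fun h => h.elim id fun hneg => ?_⟩
  rw [ha]
  exact hneg.units_conj u⁻¹

end

theorem matrix_nilClean_iff_weaklyNilClean {n : Type*} [Fintype n] [DecidableEq n]
    {R : Type*} [CommRing R] (A : Matrix n n R)
    (hsim : ∃ P : (Matrix n n R)ˣ, -A = (P : Matrix n n R) * A * ((P⁻¹ : (Matrix n n R)ˣ) : Matrix n n R)) :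
    (∃ N E : Matrix n n R, IsNilpotent N ∧ IsIdempotentElem E ∧ A = N + E) ↔
      (∃ N E : Matrix n n R, IsNilpotent N ∧ IsIdempotentElem E ∧
        (A = N + E ∨ A = N - E)) := by
  obtain ⟨P, hP⟩ := hsim
  exact isNilClean_iff_isWeaklyNilClean_of_neg_eq_conj P hP
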